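/- arXiv:2003.06915 — 4 statements merged into one kernel-verified Lean document; each statement's English description precedes it below -/
import Mathlib

section
/- Let E be a finite-dimensional real inner product space, u : E × ℝ → E a velocity field, μ : E × ℝ → ℝ, and let k > 0, ν > 0. Suppose c̄ : E × ℝ → ℝ is differentiable at a point (x, t) and its material derivative there equals kμ(x,t), i.e., the Fréchet derivative of c̄ at (x,t) applied to the direction (u(x,t), 1) equals k·μ(x,t). Then the function c := p ↦ ν(1 − exp(−c̄(p)/k)) is differentiable at (x,t) and its material derivative at (x,t) equals μ(x,t)·(ν − c(x,t)); that is, c satisfies the advection–reaction equation ∂c/∂t + u·∇c = μ(ν − c) at (x,t). -/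
open Real

/-- The paper's change of variable `c = ν (1 - exp (-c̄ / k))`. -/
noncomputable def saturation (ν k s : ℝ) : ℝ := ν * (1 - exp (-s / k))

theorem hasDerivAt_saturation (ν k s : ℝ) :
    HasDerivAt (saturation ν k) (ν / k * exp (-s / k)) s := by
  refine ((((hasDerivAt_id s).neg.div_const k).exp.const_sub 1).const_mul ν).congr_deriv ?_
  simp only [Pi.neg_apply, id]
  ring

/-- The profile `φ = saturation ν k` solves `k φ' = ν - φ`; by the chain rule this turns
`D c̄ = k μ` into `D (φ ∘ c̄) = μ (ν - φ ∘ c̄)`. -/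
theorem mul_deriv_saturation {k : ℝ} (hk : k ≠ 0) (ν s : ℝ) :
    k * (ν / k * exp (-s / k)) = ν - saturation ν k s := by
  unfold saturation
  field_simp
  ring

theorem transformed_equation_implies_advection_reaction_general
    {E : Type*} [NormedAddCommGroup E] [InnerProductSpace ℝ E]
    (u : E × ℝ → E) (μ : E × ℝ → ℝ) (k ν : ℝ) (hk : 0 < k)
    (cb : E × ℝ → ℝ) (x : E) (t : ℝ)
    (hdiff : DifferentiableAt ℝ cb (x, t))
    (heq : fderiv ℝ cb (x, t) (u (x, t), 1) = k * μ (x, t)) :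
    DifferentiableAt ℝ (fun p => ν * (1 - Real.exp (-(cb p) / k))) (x, t) ∧
    fderiv ℝ (fun p => ν * (1 - Real.exp (-(cb p) / k))) (x, t) (u (x, t), 1)
      = μ (x, t) * (ν - ν * (1 - Real.exp (-(cb (x, t)) / k))) := by
  have hc : HasFDerivAt (saturation ν k ∘ cb)
      ((ν / k * exp (-cb (x, t) / k)) • fderiv ℝ cb (x, t)) (x, t) :=
    (hasDerivAt_saturation ν k _).comp_hasFDerivAt (x, t) hdiff.hasFDerivAt
  refine ⟨hc.differentiableAt, ?_⟩
  calc fderiv ℝ (saturation ν k ∘ cb) (x, t) (u (x, t), 1)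
      = μ (x, t) * (k * (ν / k * exp (-cb (x, t) / k))) := by
        rw [hc.fderiv, smul_apply, heq, smul_eq_mul]
        ring
    _ = μ (x, t) * (ν - saturation ν k (cb (x, t))) := by
        rw [mul_deriv_saturation hk.ne']

/-- If the transformed variable `c̄` satisfies the transformed advection–reaction
equation `∂c̄/∂t + u·∇c̄ = k μ` at `(x, t)` (stated via the Fréchet derivative in
the direction `(u (x,t), 1)`), then `c := ν (1 - exp (-c̄ / k))` is differentiable
at `(x, t)` and satisfies the advection–reaction equation
`∂c/∂t + u·∇c = μ (ν - c)` there. -/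
theorem transformed_equation_implies_advection_reaction
    {E : Type*} [NormedAddCommGroup E] [InnerProductSpace ℝ E]
    [FiniteDimensional ℝ E]
    (u : E × ℝ → E) (μ : E × ℝ → ℝ) (k ν : ℝ) (hk : 0 < k) (hν : 0 < ν)
    (cb : E × ℝ → ℝ) (x : E) (t : ℝ)
    (hdiff : DifferentiableAt ℝ cb (x, t))
    (heq : fderiv ℝ cb (x, t) (u (x, t), 1) = k * μ (x, t)) :
    DifferentiableAt ℝ (fun p => ν * (1 - Real.exp (-(cb p) / k))) (x, t) ∧
    fderiv ℝ (fun p => ν * (1 - Real.exp (-(cb p) / k))) (x, t) (u (x, t), 1)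
      = μ (x, t) * (ν - ν * (1 - Real.exp (-(cb (x, t)) / k))) :=
  transformed_equation_implies_advection_reaction_general u μ k ν hk cb x t hdiff heq
end

section
/- Let E be a finite-dimensional real inner product space, x ∈ E a boundary point with outward unit normal n ∈ E, and let D > 0, k > 0, c_S⁰ > 0 and φ ∈ ℝ. Suppose c̄ : E → ℝ is differentiable at x and set c := y ↦ c_S⁰·(1 − exp(−c̄(y)/k)). Then the Robin boundary condition D·(∇c(x)·n) + φ·c(x) = φ·c_S⁰ holds if and only if the Neumann condition D·(∇c̄(x)·n) = k·φ holds; in particular, for the choice k = c_S⁰ the Robin condition is equivalent to D·(∇c̄(x)·n) = φ·c_S⁰. -/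
/-!
By the chain rule `∇c = (ν / k) e ∇c̄` with `e = exp (-c̄ / k) > 0`, while `c = ν (1 - e)`.
Substituting, the Robin condition minus `φ ν` becomes `(ν e / k) (D ∇c̄·n - k φ)`, and the
factor `ν e / k` never vanishes.
-/

open Real

/-- The paper's `c = ν (1 - exp (-c̄ / k))` is `expChangeOfVariable ν k ∘ c̄`. -/
noncomputable def expChangeOfVariable (ν k t : ℝ) : ℝ := ν * (1 - exp (-t / k))

theorem hasDerivAt_expChangeOfVariable (ν k t : ℝ) :
    HasDerivAt (expChangeOfVariable ν k) (ν / k * exp (-t / k)) t := by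
  refine ((((hasDerivAt_neg t).div_const k).exp.const_sub 1).const_mul ν).congr_deriv ?_
  ring

theorem fderiv_comp_expChangeOfVariable {E : Type*} [NormedAddCommGroup E] [NormedSpace ℝ E]
    {f : E → ℝ} {x : E} (hf : DifferentiableAt ℝ f x) (ν k : ℝ) (v : E) :
    fderiv ℝ (expChangeOfVariable ν k ∘ f) x v = ν / k * exp (-f x / k) * fderiv ℝ f x v := by
  rw [((hasDerivAt_expChangeOfVariable ν k (f x)).comp_hasFDerivAt x hf.hasFDerivAt).fderiv]
  simp

theorem robin_iff_neumann_of_exp_factor {ν k e D φ a : ℝ} (hν : ν ≠ 0) (hk : k ≠ 0) (he : e ≠ 0) :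
    D * (ν / k * e * a) + φ * (ν * (1 - e)) = φ * ν ↔ D * a = k * φ := by
  have key : D * (ν / k * e * a) + φ * (ν * (1 - e)) - φ * ν = ν * e / k * (D * a - k * φ) := by
    field_simp
    ring
  rw [← sub_eq_zero, key, mul_eq_zero, sub_eq_zero, or_iff_right]
  exact div_ne_zero (mul_ne_zero hν he) hk

theorem robin_iff_neumann_expChangeOfVariable {E : Type*} [NormedAddCommGroup E]
    [NormedSpace ℝ E] {f : E → ℝ} {x : E} (hf : DifferentiableAt ℝ f x) {ν k : ℝ}
    (hν : ν ≠ 0) (hk : k ≠ 0) (D φ : ℝ) (n : E) :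
    D * fderiv ℝ (expChangeOfVariable ν k ∘ f) x n
        + φ * (expChangeOfVariable ν k ∘ f) x = φ * ν ↔ D * fderiv ℝ f x n = k * φ := by
  rw [fderiv_comp_expChangeOfVariable hf]
  exact robin_iff_neumann_of_exp_factor hν hk (exp_pos _).ne'

theorem robin_to_neumann_change_of_variable_general
    {E : Type*} [NormedAddCommGroup E] [InnerProductSpace ℝ E]
    (x n : E) (D k cS0 φ : ℝ)
    (hk : 0 < k) (hcS0 : 0 < cS0)
    (cb : E → ℝ) (hdiff : DifferentiableAt ℝ cb x)
    (c : E → ℝ) (hc : ∀ y, c y = cS0 * (1 - Real.exp (-(cb y) / k))) :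
    ((D * fderiv ℝ c x n + φ * c x = φ * cS0)
        ↔ (D * fderiv ℝ cb x n = k * φ)) ∧
    (k = cS0 →
      ((D * fderiv ℝ c x n + φ * c x = φ * cS0)
        ↔ (D * fderiv ℝ cb x n = φ * cS0))) := by
  have hc' : c = expChangeOfVariable cS0 k ∘ cb := funext hc
  have robin_iff := robin_iff_neumann_expChangeOfVariable hdiff hcS0.ne' hk.ne' D φ n
  rw [← hc'] at robin_iff
  refine ⟨robin_iff, fun hkc => ?_⟩
  rw [robin_iff, hkc, mul_comm cS0]

/-- For the change of variable `c := c_S⁰ (1 - exp (-c̄ / k))`, the Robin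
boundary condition `D ∇c·n + φ c = φ c_S⁰` at a boundary point `x` with
outward unit normal `n` is equivalent to the Neumann condition
`D ∇c̄·n = k φ`; in particular, for `k = c_S⁰` it is equivalent to
`D ∇c̄·n = φ c_S⁰`. -/
theorem robin_to_neumann_change_of_variable
    {E : Type*} [NormedAddCommGroup E] [InnerProductSpace ℝ E]
    [FiniteDimensional ℝ E]
    (x n : E) (hn : ‖n‖ = 1) (D k cS0 φ : ℝ)
    (hD : 0 < D) (hk : 0 < k) (hcS0 : 0 < cS0)
    (cb : E → ℝ) (hdiff : DifferentiableAt ℝ cb x)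
    (c : E → ℝ) (hc : ∀ y, c y = cS0 * (1 - Real.exp (-(cb y) / k))) :
    ((D * fderiv ℝ c x n + φ * c x = φ * cS0)
        ↔ (D * fderiv ℝ cb x n = k * φ)) ∧
    (k = cS0 →
      ((D * fderiv ℝ c x n + φ * c x = φ * cS0)
        ↔ (D * fderiv ℝ cb x n = φ * cS0))) :=
  robin_to_neumann_change_of_variable_general x n D k cS0 φ hk hcS0 cb hdiff c hc
end

section
/- Let S, E, W : ℝ → Matrix (Fin 3) (Fin 3) ℝ be differentiable matrix-valued functions and α₁, α₂, α₃ ∈ ℝ. Assume for every t: E(t) is symmetric with trace(E(t)) = 0 (incompressible flow), W(t) is skew-symmetric, the second invariant II(S(t)) := ½((trace S(t))² − trace(S(t)²)) is nonzero, and S satisfies the morphology equation S′(t) = −α₁(S(t) − g(t)·1) + α₂(E(t)S(t) + S(t)E(t)) + α₃(W(t)S(t) − S(t)W(t)), where g(t) = 3·det(S(t))/II(S(t)) and 1 is the identity matrix. Then the function t ↦ det(S(t)) has derivative zero at every t; that is, the determinant of the shape tensor (the RBC volume) is conserved. -/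
attribute [local instance] Matrix.normedAddCommGroup Matrix.normedSpace

open Matrix

/-- Jacobi's formula for `3 × 3` matrices along a differentiable path. -/
lemma hasDerivAt_det_aux (S : ℝ → Matrix (Fin 3) (Fin 3) ℝ)
    (S' : Matrix (Fin 3) (Fin 3) ℝ) (t : ℝ) (h : HasDerivAt S S' t) :
    HasDerivAt (fun s => (S s).det) ((adjugate (S t) * S').trace) t := by
  have hd : ∀ i j : Fin 3, HasDerivAt (fun s => S s i j) (S' i j) t := by
    intro i j
    exact hasDerivAt_pi.1 (hasDerivAt_pi.1 h i) j
  have H : HasDerivAt (fun s =>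
      S s 0 0 * S s 1 1 * S s 2 2 - S s 0 0 * S s 1 2 * S s 2 1
      - S s 0 1 * S s 1 0 * S s 2 2 + S s 0 1 * S s 1 2 * S s 2 0
      + S s 0 2 * S s 1 0 * S s 2 1 - S s 0 2 * S s 1 1 * S s 2 0)
      ((S' 0 0 * S t 1 1 + S t 0 0 * S' 1 1) * S t 2 2
        + S t 0 0 * S t 1 1 * S' 2 2
      - ((S' 0 0 * S t 1 2 + S t 0 0 * S' 1 2) * S t 2 1
        + S t 0 0 * S t 1 2 * S' 2 1)
      - ((S' 0 1 * S t 1 0 + S t 0 1 * S' 1 0) * S t 2 2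
        + S t 0 1 * S t 1 0 * S' 2 2)
      + ((S' 0 1 * S t 1 2 + S t 0 1 * S' 1 2) * S t 2 0
        + S t 0 1 * S t 1 2 * S' 2 0)
      + ((S' 0 2 * S t 1 0 + S t 0 2 * S' 1 0) * S t 2 1
        + S t 0 2 * S t 1 0 * S' 2 1)
      - ((S' 0 2 * S t 1 1 + S t 0 2 * S' 1 1) * S t 2 0
        + S t 0 2 * S t 1 1 * S' 2 0)) t := by
    exact (((((((hd 0 0).mul (hd 1 1)).mul (hd 2 2)).sub
      (((hd 0 0).mul (hd 1 2)).mul (hd 2 1))).sub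
      (((hd 0 1).mul (hd 1 0)).mul (hd 2 2))).add
      (((hd 0 1).mul (hd 1 2)).mul (hd 2 0))).add
      (((hd 0 2).mul (hd 1 0)).mul (hd 2 1))).sub
      (((hd 0 2).mul (hd 1 1)).mul (hd 2 0))
  have hfun : (fun s => (S s).det) = (fun s =>
      S s 0 0 * S s 1 1 * S s 2 2 - S s 0 0 * S s 1 2 * S s 2 1
      - S s 0 1 * S s 1 0 * S s 2 2 + S s 0 1 * S s 1 2 * S s 2 0
      + S s 0 2 * S s 1 0 * S s 2 1 - S s 0 2 * S s 1 1 * S s 2 0) := by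
    funext s; exact det_fin_three (S s)
  rw [hfun]
  convert H using 1
  simp only [adjugate_fin_three, trace, diag, Matrix.mul_apply, Fin.sum_univ_three,
    Matrix.of_apply, Matrix.cons_val', Matrix.cons_val_zero, Matrix.cons_val_one,
    Matrix.head_cons, Matrix.empty_val', Matrix.cons_val_fin_one, Matrix.head_fin_const,
    Matrix.cons_val_two, Matrix.tail_cons]
  ring

/-- The trace of the adjugate of a `3 × 3` matrix is its second invariant. -/
lemma trace_adjugate_fin_three (M : Matrix (Fin 3) (Fin 3) ℝ) :
    (adjugate M).trace = (1 / 2) * ((M.trace) ^ 2 - (M * M).trace) := by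
  simp only [adjugate_fin_three, trace, diag, Matrix.mul_apply, Fin.sum_univ_three,
    Matrix.of_apply, Matrix.cons_val', Matrix.cons_val_zero, Matrix.cons_val_one,
    Matrix.head_cons, Matrix.empty_val', Matrix.cons_val_fin_one, Matrix.head_fin_const,
    Matrix.cons_val_two, Matrix.tail_cons]
  ring

/-- Volume conservation in the morphology model: if the shape tensor `S`
satisfies the morphology equation with symmetric trace-free strain rate tensor
`Em`, skew-symmetric vorticity tensor `Wm`, and
`g t = 3 det (S t) / II (S t)` where `II M = ½ ((tr M)² - tr (M²))` is the
second invariant, then `det ∘ S` has derivative zero everywhere. -/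
theorem morphology_model_volume_conservation
    (S Em Wm : ℝ → Matrix (Fin 3) (Fin 3) ℝ) (α₁ α₂ α₃ : ℝ)
    (hS : Differentiable ℝ S) (hEm : Differentiable ℝ Em)
    (hWm : Differentiable ℝ Wm)
    (hEsymm : ∀ t, (Em t).IsSymm)
    (hEtr : ∀ t, (Em t).trace = 0)
    (hWskew : ∀ t, (Wm t)ᵀ = -(Wm t))
    (II : Matrix (Fin 3) (Fin 3) ℝ → ℝ)
    (hII : ∀ M, II M = (1 / 2) * ((M.trace) ^ 2 - (M * M).trace))
    (hIIne : ∀ t, II (S t) ≠ 0)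
    (g : ℝ → ℝ) (hg : ∀ t, g t = 3 * (S t).det / II (S t))
    (heq : ∀ t, deriv S t =
      (-α₁) • (S t - g t • (1 : Matrix (Fin 3) (Fin 3) ℝ))
      + α₂ • (Em t * S t + S t * Em t)
      + α₃ • (Wm t * S t - S t * Wm t)) :
    ∀ t, deriv (fun s => (S s).det) t = 0 := by
  intro t
  have hDA := hasDerivAt_det_aux S (deriv S t) t (hS t).hasDerivAt
  rw [hDA.deriv]
  set A := adjugate (S t) with hA
  have hAS : A * S t = (S t).det • 1 := adjugate_mul (S t)
  have hSA : S t * A = (S t).det • 1 := mul_adjugate (S t)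
  have htrA : A.trace = II (S t) := by
    rw [hA, trace_adjugate_fin_three, hII]
  have htrAS : (A * S t).trace = 3 * (S t).det := by
    rw [hAS, trace_smul, trace_one]
    simp [Fintype.card_fin]; ring
  have htrW : (Wm t).trace = 0 := by
    have h1 : (Wm t)ᵀ.trace = (Wm t).trace := trace_transpose _
    rw [hWskew t, trace_neg] at h1
    linarith
  -- the three trace contributions
  have t1 : (A * (S t - g t • (1 : Matrix (Fin 3) (Fin 3) ℝ))).trace = 0 := by
    rw [Matrix.mul_sub, Matrix.mul_smul, Matrix.mul_one, trace_sub, trace_smul, htrAS, htrA,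
      hg t, smul_eq_mul, div_mul_cancel₀ _ (hIIne t)]
    ring
  have tES : (A * (Em t * S t)).trace = 0 := by
    rw [trace_mul_comm, Matrix.mul_assoc, hSA, Matrix.mul_smul, Matrix.mul_one,
      trace_smul, hEtr t, smul_zero]
  have tSE : (A * (S t * Em t)).trace = 0 := by
    rw [← Matrix.mul_assoc, hAS, Matrix.smul_mul, Matrix.one_mul, trace_smul, hEtr t, smul_zero]
  have tWS : (A * (Wm t * S t)).trace = 0 := by
    rw [trace_mul_comm, Matrix.mul_assoc, hSA, Matrix.mul_smul, Matrix.mul_one,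
      trace_smul, htrW, smul_zero]
  have tSW : (A * (S t * Wm t)).trace = 0 := by
    rw [← Matrix.mul_assoc, hAS, Matrix.smul_mul, Matrix.one_mul, trace_smul, htrW, smul_zero]
  rw [heq t]
  simp only [Matrix.mul_add, Matrix.mul_sub, Matrix.mul_smul, trace_add, trace_sub,
    trace_smul, Matrix.mul_one, smul_eq_mul, tES, tSE, tWS, tSW, htrAS, htrA, hg t]
  rw [div_mul_cancel₀ _ (hIIne t)]
  ring
end

section
/- Let E be a finite-dimensional real inner product space, u : E × ℝ → E a velocity field, μ : E × ℝ → ℝ with μ(p) ≥ 0 everywhere, and k > 0, ν > 0. Let X : ℝ → E be a differentiable characteristic curve with X′(t) = u(X(t), t) for all t, and suppose c̄ : E × ℝ → ℝ is differentiable at every point (X(t), t) with material derivative there equal to k·μ(X(t), t). If c̄(X(t₀), t₀) ≥ 0 for some t₀, then the concentration c := ν(1 − exp(−c̄/k)) satisfies 0 ≤ c(X(t), t) < ν for all t ≥ t₀; that is, the change of variable together with the transformed equation preserves the physical constraints along characteristics. -/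
/-!
Along the characteristic, the chain rule turns the material derivative of `c̄` into the ordinary
derivative of `t ↦ c̄ (X t, t)`, which therefore equals `k μ ≥ 0`. So `c̄` is nondecreasing along
the curve and stays nonnegative after `t₀`, and `x ↦ ν (1 - exp (-x / k))` maps `[0, ∞)` into
`[0, ν)`.
-/

open Real

theorem DifferentiableAt.hasDerivAt_comp_prodMk {E F : Type*}
    [NormedAddCommGroup E] [NormedSpace ℝ E] [NormedAddCommGroup F] [NormedSpace ℝ F]
    {f : E × ℝ → F} {X : ℝ → E} {v : E} {t : ℝ}
    (hf : DifferentiableAt ℝ f (X t, t)) (hX : HasDerivAt X v t) :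
    HasDerivAt (fun s => f (X s, s)) (fderiv ℝ f (X t, t) (v, 1)) t :=
  hf.hasFDerivAt.comp_hasDerivAt (f := fun s => (X s, s)) t (hX.prodMk (hasDerivAt_id t))

theorem monotone_along_characteristic {E : Type*} [NormedAddCommGroup E] [NormedSpace ℝ E]
    (u : E × ℝ → E) (X : ℝ → E) (hX : ∀ t, HasDerivAt X (u (X t, t)) t)
    (f : E × ℝ → ℝ) (hf : ∀ t, DifferentiableAt ℝ f (X t, t))
    (hmat : ∀ t, 0 ≤ fderiv ℝ f (X t, t) (u (X t, t), 1)) :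
    Monotone fun t => f (X t, t) :=
  monotone_of_hasDerivAt_nonneg (fun t => (hf t).hasDerivAt_comp_prodMk (hX t)) hmat

theorem mul_one_sub_exp_neg_div_mem_Ico {k ν x : ℝ} (hk : 0 < k) (hν : 0 < ν) (hx : 0 ≤ x) :
    ν * (1 - exp (-x / k)) ∈ Set.Ico 0 ν := by
  have h_le : exp (-x / k) ≤ 1 :=
    exp_le_one_iff.mpr (div_nonpos_of_nonpos_of_nonneg (neg_nonpos.mpr hx) hk.le)
  have h_pos : 0 < exp (-x / k) := exp_pos _
  constructor
  · exact mul_nonneg hν.le (sub_nonneg.mpr h_le)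
  · nlinarith

theorem change_of_variable_preserves_constraints_along_characteristics_general
    {E : Type*} [NormedAddCommGroup E] [InnerProductSpace ℝ E]
    (u : E × ℝ → E) (μ : E × ℝ → ℝ) (hμ : ∀ p, 0 ≤ μ p)
    (k ν : ℝ) (hk : 0 < k) (hν : 0 < ν)
    (X : ℝ → E) (hX : ∀ t, HasDerivAt X (u (X t, t)) t)
    (cb : E × ℝ → ℝ)
    (hdiff : ∀ t, DifferentiableAt ℝ cb (X t, t))
    (heq : ∀ t, fderiv ℝ cb (X t, t) (u (X t, t), 1) = k * μ (X t, t))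
    (t₀ : ℝ) (h0 : 0 ≤ cb (X t₀, t₀)) :
    ∀ t ≥ t₀, 0 ≤ ν * (1 - Real.exp (-(cb (X t, t)) / k)) ∧
      ν * (1 - Real.exp (-(cb (X t, t)) / k)) < ν := by
  have hmono : Monotone fun t => cb (X t, t) :=
    monotone_along_characteristic u X hX cb hdiff fun t =>
      (heq t).symm ▸ mul_nonneg hk.le (hμ _)
  intro t ht
  exact mul_one_sub_exp_neg_div_mem_Ico hk hν (h0.trans (hmono ht))

/-- Along a characteristic curve `X` with `X' t = u (X t, t)`, if the
transformed variable `c̄` solves the transformed equation (material derivative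
equal to `k μ ≥ 0`) and `c̄ (X t₀, t₀) ≥ 0`, then the concentration
`c := ν (1 - exp (-c̄ / k))` satisfies the physical constraints
`0 ≤ c (X t, t) < ν` for all `t ≥ t₀`. -/
theorem change_of_variable_preserves_constraints_along_characteristics
    {E : Type*} [NormedAddCommGroup E] [InnerProductSpace ℝ E]
    [FiniteDimensional ℝ E]
    (u : E × ℝ → E) (μ : E × ℝ → ℝ) (hμ : ∀ p, 0 ≤ μ p)
    (k ν : ℝ) (hk : 0 < k) (hν : 0 < ν)
    (X : ℝ → E) (hX : ∀ t, HasDerivAt X (u (X t, t)) t)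
    (cb : E × ℝ → ℝ)
    (hdiff : ∀ t, DifferentiableAt ℝ cb (X t, t))
    (heq : ∀ t, fderiv ℝ cb (X t, t) (u (X t, t), 1) = k * μ (X t, t))
    (t₀ : ℝ) (h0 : 0 ≤ cb (X t₀, t₀)) :
    ∀ t ≥ t₀, 0 ≤ ν * (1 - Real.exp (-(cb (X t, t)) / k)) ∧
      ν * (1 - Real.exp (-(cb (X t, t)) / k)) < ν :=
  change_of_variable_preserves_constraints_along_characteristics_general u μ hμ k ν hk hν X hX cb
    hdiff heq t₀ h0
end
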